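/- arXiv:1607.02472 — 10 statements merged into one kernel-verified Lean document; each statement's English description precedes it below -/
import Mathlib

section
/- Let ψ : ℝ₊ → ℝ₊ be a continuous nonnegative function with ψ(t) = 0 iff t = 1, and let h_i(·|φ) be positive probability densities on a space X for i = 1,…,n. If for some i and some point x ∈ int(X) at which both h_i(·|φ) and h_i(·|φ') are continuous we have h_i(x|φ) ≠ h_i(x|φ'), then D_ψ(φ,φ') = (1/n) Σ_{i=1}^n ∫_X ψ(h_i(x|φ)/h_i(x|φ')) h_i(x|φ') dx > 0. -/
open MeasureTheory

/-- Tseng's Lemma 2: if some conditional density `h i (·|φ)` differs from `h i (·|φ')`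
at a point of the interior of `X` where both are continuous, then the proximal term
`D_ψ(φ,φ') = (1/n) Σ_i ∫_X ψ(h_i(x|φ)/h_i(x|φ')) h_i(x|φ') dx` is positive. -/
theorem proximal_term_pos_of_densities_differ
    {m : ℕ} (X : Set (Fin m → ℝ)) (n : ℕ) (hn : 0 < n)
    (ψ : ℝ → ℝ) (hψcont : ContinuousOn ψ (Set.Ici 0))
    (hψnonneg : ∀ t ∈ Set.Ici (0:ℝ), 0 ≤ ψ t)
    (hψzero : ∀ t ∈ Set.Ici (0:ℝ), ψ t = 0 ↔ t = 1)
    (hφ hφ' : Fin n → (Fin m → ℝ) → ℝ)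
    -- each `hφ i`, `hφ' i` is a probability density on `X`, positive a.e.
    (hdens : ∀ i, (∫ x in X, hφ i x = 1) ∧ (∫ x in X, hφ' i x = 1))
    (hpos : ∀ i, ∀ᵐ x ∂(volume.restrict X), 0 < hφ i x ∧ 0 < hφ' i x)
    (hint : ∀ i, IntegrableOn (fun x => ψ (hφ i x / hφ' i x) * hφ' i x) X)
    (x₀ : Fin m → ℝ) (hx₀ : x₀ ∈ interior X)
    (i₀ : Fin n)
    (hc : ContinuousAt (hφ i₀) x₀) (hc' : ContinuousAt (hφ' i₀) x₀)
    (hne : hφ i₀ x₀ ≠ hφ' i₀ x₀) :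
    0 < (1 / (n : ℝ)) *
      ∑ i : Fin n, ∫ x in X, ψ (hφ i x / hφ' i x) * hφ' i x := by
  -- nonnegativity a.e. of each integrand
  have hae : ∀ i, (0:(Fin m → ℝ) → ℝ) ≤ᵐ[volume.restrict X]
      fun x => ψ (hφ i x / hφ' i x) * hφ' i x := by
    intro i
    filter_upwards [hpos i] with x hx
    exact mul_nonneg (hψnonneg _ (le_of_lt (div_pos hx.1 hx.2))) hx.2.le
  have key : ∀ i, 0 ≤ ∫ x in X, ψ (hφ i x / hφ' i x) * hφ' i x := fun i =>
    integral_nonneg_of_ae (hae i)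
  -- a ball around x₀ inside X on which hφ i₀ ≠ hφ' i₀
  have hF : ∀ᶠ x in nhds x₀, hφ i₀ x ≠ hφ' i₀ x ∧ x ∈ X := by
    have h1 : ∀ᶠ x in nhds x₀, hφ i₀ x ≠ hφ' i₀ x := by
      have : ContinuousAt (fun x => hφ i₀ x - hφ' i₀ x) x₀ := hc.sub hc'
      have h0 : hφ i₀ x₀ - hφ' i₀ x₀ ≠ 0 := sub_ne_zero.mpr hne
      filter_upwards [this.eventually_ne h0] with x hx
      exact sub_ne_zero.mp hx
    have h2 : ∀ᶠ x in nhds x₀, x ∈ X :=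
      Filter.mem_of_superset (mem_interior_iff_mem_nhds.mp hx₀) (fun _ h => h)
    exact h1.and h2
  obtain ⟨ε, εpos, hball⟩ := Metric.eventually_nhds_iff.mp hF
  set B : Set (Fin m → ℝ) := Metric.ball x₀ ε with hBdef
  have hBX : B ⊆ X := fun x hx => (hball (Metric.mem_ball.mp hx)).2
  have hBne : ∀ x ∈ B, hφ i₀ x ≠ hφ' i₀ x := fun x hx =>
    (hball (Metric.mem_ball.mp hx)).1
  set f : (Fin m → ℝ) → ℝ := fun x => ψ (hφ i₀ x / hφ' i₀ x) * hφ' i₀ x with hfdef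
  -- a.e. positivity of f on B
  have hresmono : volume.restrict B ≤ volume.restrict X :=
    Measure.restrict_mono hBX le_rfl
  have hposB : ∀ᵐ x ∂(volume.restrict B), 0 < f x := by
    have hp : ∀ᵐ x ∂(volume.restrict B), 0 < hφ i₀ x ∧ 0 < hφ' i₀ x :=
      (hpos i₀).filter_mono (ae_mono hresmono)
    have hmem : ∀ᵐ x ∂(volume.restrict B), x ∈ B :=
      ae_restrict_mem Metric.isOpen_ball.measurableSet
    filter_upwards [hp, hmem] with x hx hxB
    have hr : 0 < hφ i₀ x / hφ' i₀ x := div_pos hx.1 hx.2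
    have hr1 : hφ i₀ x / hφ' i₀ x ≠ 1 := by
      intro h
      exact hBne x hxB ((div_eq_one_iff_eq hx.2.ne').mp h)
    have hψpos : 0 < ψ (hφ i₀ x / hφ' i₀ x) := by
      rcases lt_or_eq_of_le (hψnonneg _ hr.le) with h | h
      · exact h
      · exact absurd ((hψzero _ hr.le).mp h.symm) hr1
    exact mul_pos hψpos hx.2
  -- the integral over B is positive
  have hIB : IntegrableOn f B := (hint i₀).mono_set hBX
  have hnonnegB : (0:(Fin m → ℝ) → ℝ) ≤ᵐ[volume.restrict B] f := by
    filter_upwards [hposB] with x hx using hx.le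
  have hsupp : 0 < volume (Function.support f ∩ B) := by
    have hnull : volume.restrict B (Function.support f)ᶜ = 0 := by
      have h : ∀ᵐ x ∂(volume.restrict B), x ∈ Function.support f := by
        filter_upwards [hposB] with x hx using hx.ne'
      rw [ae_iff] at h
      exact h
    rw [Measure.restrict_apply' Metric.isOpen_ball.measurableSet] at hnull
    have hBpos : 0 < volume B := Metric.measure_ball_pos volume x₀ εpos
    have hcover : volume B ≤ volume (Function.support f ∩ B) +
        volume ((Function.support f)ᶜ ∩ B) := by
      refine le_trans (measure_mono ?_) (measure_union_le _ _)
      intro x hx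
      by_cases h : x ∈ Function.support f
      · exact Or.inl ⟨h, hx⟩
      · exact Or.inr ⟨h, hx⟩
    rw [hnull, add_zero] at hcover
    exact lt_of_lt_of_le hBpos hcover
  have hIBpos : 0 < ∫ x in B, f x :=
    (setIntegral_pos_iff_support_of_nonneg_ae hnonnegB hIB).mpr hsupp
  have hIXpos : 0 < ∫ x in X, f x := by
    refine lt_of_lt_of_le hIBpos ?_
    exact setIntegral_mono_set (hint i₀) (hae i₀) (HasSubset.Subset.eventuallyLE hBX)
  -- conclude
  have hsum : 0 < ∑ i : Fin n, ∫ x in X, ψ (hφ i x / hφ' i x) * hφ' i x := by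
    refine Finset.sum_pos' (fun i _ => key i) ⟨i₀, Finset.mem_univ i₀, hIXpos⟩
  exact mul_pos (by positivity) hsum
end

section
/- Let D̂ : Φ → ℝ be continuously differentiable and D_ψ : Φ×Φ → [0,∞) be such that ∇₁D_ψ is continuous and ∇₁D_ψ(φ,φ) = 0 for all φ. Suppose (φ^k) satisfies the proximal recurrence φ^{k+1} ∈ argmin_φ [D̂(φ) + D_ψ(φ,φ^k)] with each φ^{k+1} in the interior of Φ, and suppose φ^{k+1} − φ^k → 0. Then the limit φ^∞ of every convergent subsequence of (φ^k) satisfies ∇D̂(φ^∞) = 0. -/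
open Filter Topology

/-!
Along a convergent subsequence `φ (N k) → φ∞`, the vanishing increments force `φ (N k + 1) → φ∞`
as well. The optimality condition writes `∇D̂ (φ (N k + 1))` as `-G (φ (N k + 1)) (φ (N k))`,
which tends to `-G φ∞ φ∞ = 0`, while continuity of `∇D̂` makes it tend to `∇D̂ φ∞`.
-/

theorem ContDiff.continuous_gradient {𝕜 F : Type*} [RCLike 𝕜] [NormedAddCommGroup F]
    [InnerProductSpace 𝕜 F] [CompleteSpace F] {f : F → 𝕜} (hf : ContDiff 𝕜 1 f) :
    Continuous (gradient f) :=
  (InnerProductSpace.toDual 𝕜 F).symm.continuous.comp (hf.continuous_fderiv one_ne_zero)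

theorem Filter.Tendsto.comp_add_one_of_tendsto_sub {E : Type*} [TopologicalSpace E] [AddGroup E]
    [IsTopologicalAddGroup E] {u : ℕ → E} {N : ℕ → ℕ} {x : E}
    (hx : Tendsto (fun k => u (N k)) atTop (𝓝 x))
    (hsub : Tendsto (fun k => u (k + 1) - u k) atTop (𝓝 0)) (hN : Tendsto N atTop atTop) :
    Tendsto (fun k => u (N k + 1)) atTop (𝓝 x) := by
  simpa using (hsub.comp hN).add hx

theorem eq_zero_of_tendsto_of_add_eq_zero {X E : Type*} [TopologicalSpace X] [TopologicalSpace E]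
    [AddGroup E] [IsTopologicalAddGroup E] [T2Space E] {F : X → E} {G : X → X → E}
    {a b : ℕ → X} {x : X} (hF : ContinuousAt F x)
    (hG : ContinuousAt (fun p : X × X => G p.1 p.2) (x, x)) (hGx : G x x = 0)
    (hsum : ∀ k, F (a k) + G (a k) (b k) = 0)
    (ha : Tendsto a atTop (𝓝 x)) (hb : Tendsto b atTop (𝓝 x)) :
    F x = 0 := by
  have hGab : Tendsto (fun k => -G (a k) (b k)) atTop (𝓝 0) := by
    simpa [hGx] using (hG.tendsto.comp (ha.prodMk_nhds hb)).neg
  have hFa : Tendsto (fun k => F (a k)) atTop (𝓝 0) :=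
    hGab.congr fun k => (eq_neg_of_add_eq_zero_left (hsum k)).symm
  exact tendsto_nhds_unique (hF.tendsto.comp ha) hFa

/-- If `D̂` is C¹, the first-variable gradient `G = ∇₁D_ψ` of the proximal term is
continuous and vanishes on the diagonal, the proximal sequence satisfies the
first-order optimality condition and `φ^{k+1} − φ^k → 0`, then the limit of every
convergent subsequence of `(φ^k)` is a stationary point of `D̂`. -/
theorem limit_of_convergent_subsequence_is_stationary
    {d : ℕ}
    (Dhat : EuclideanSpace ℝ (Fin d) → ℝ)
    (hD : ContDiff ℝ 1 Dhat)
    (G : EuclideanSpace ℝ (Fin d) → EuclideanSpace ℝ (Fin d) → EuclideanSpace ℝ (Fin d))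
    (hGcont : Continuous fun p : EuclideanSpace ℝ (Fin d) × EuclideanSpace ℝ (Fin d) => G p.1 p.2)
    (hGdiag : ∀ φ, G φ φ = 0)
    (φ : ℕ → EuclideanSpace ℝ (Fin d))
    (hopt : ∀ k, gradient Dhat (φ (k+1)) + G (φ (k+1)) (φ k) = 0)
    (hdiff : Tendsto (fun k => φ (k+1) - φ k) atTop (nhds 0)) :
    ∀ (N : ℕ → ℕ), StrictMono N → ∀ φinf : EuclideanSpace ℝ (Fin d),
      Tendsto (fun k => φ (N k)) atTop (nhds φinf) →
      gradient Dhat φinf = 0 := by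
  intro N hN φinf hconv
  have hnext : Tendsto (fun k => φ (N k + 1)) atTop (𝓝 φinf) :=
    hconv.comp_add_one_of_tendsto_sub hdiff hN.tendsto_atTop
  exact eq_zero_of_tendsto_of_add_eq_zero hD.continuous_gradient.continuousAt
    hGcont.continuousAt (hGdiag φinf) (fun k => hopt (N k)) hnext hconv
end

section
/- Let (φ^k) be a sequence contained in a compact set Φ^0 ⊆ ℝ^d such that D̂(φ^{k+1}) + D_ψ(φ^{k+1},φ^k) ≤ D̂(φ^k) for all k, where D̂ and D_ψ are continuous, D_ψ ≥ 0, and D_ψ(φ,φ') > 0 whenever φ ≠ φ' (identifiability of the proximal term). If the real sequence (D̂(φ^k))_k converges, then φ^{k+1} − φ^k → 0. -/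
open Filter

/-- With an identifiable proximal term (`D_ψ(φ,φ') = 0` iff `φ = φ'`), if the
sequence stays in a compact set, the proximal decrease inequality holds, and
`(D̂(φ^k))` converges, then consecutive differences tend to zero. -/
theorem consecutive_differences_tendsto_zero
    {d : ℕ} (Φ0 : Set (Fin d → ℝ)) (hΦ0 : IsCompact Φ0)
    (Dhat : (Fin d → ℝ) → ℝ) (hDcont : Continuous Dhat)
    (Dψ : (Fin d → ℝ) → (Fin d → ℝ) → ℝ)
    (hψcont : Continuous fun p : (Fin d → ℝ) × (Fin d → ℝ) => Dψ p.1 p.2)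
    (hψnonneg : ∀ φ φ', 0 ≤ Dψ φ φ')
    (hψident : ∀ φ φ', Dψ φ φ' = 0 ↔ φ = φ')
    (φ : ℕ → (Fin d → ℝ)) (hmem : ∀ k, φ k ∈ Φ0)
    (hineq : ∀ k, Dhat (φ (k+1)) + Dψ (φ (k+1)) (φ k) ≤ Dhat (φ k))
    (L : ℝ) (hconv : Tendsto (fun k => Dhat (φ k)) atTop (nhds L)) :
    Tendsto (fun k => φ (k+1) - φ k) atTop (nhds 0) := by
  -- Step 1: Dψ(φ(k+1), φ k) → 0 by squeeze
  have hg : Tendsto (fun k => Dψ (φ (k+1)) (φ k)) atTop (nhds 0) := by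
    have hub : Tendsto (fun k => Dhat (φ k) - Dhat (φ (k+1))) atTop (nhds 0) := by
      have := hconv.sub (hconv.comp (tendsto_add_atTop_nat 1))
      simpa using this
    refine tendsto_of_tendsto_of_tendsto_of_le_of_le tendsto_const_nhds hub
      (fun k => hψnonneg _ _) (fun k => by linarith [hineq k])
  -- Step 2: subsequence argument
  refine tendsto_of_subseq_tendsto fun ns hns => ?_
  set p : ℕ → (Fin d → ℝ) × (Fin d → ℝ) := fun n => (φ (ns n + 1), φ (ns n)) with hp
  have hpc : IsCompact (Φ0 ×ˢ Φ0) := hΦ0.prod hΦ0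
  obtain ⟨ab, hab, ms, hms, hlim⟩ := hpc.tendsto_subseq (x := p)
    (fun n => ⟨hmem _, hmem _⟩)
  refine ⟨ms, ?_⟩
  have h1 : Tendsto (fun n => φ (ns (ms n) + 1)) atTop (nhds ab.1) :=
    (continuous_fst.tendsto ab).comp hlim
  have h2 : Tendsto (fun n => φ (ns (ms n))) atTop (nhds ab.2) :=
    (continuous_snd.tendsto ab).comp hlim
  have hDlim : Tendsto (fun n => Dψ (φ (ns (ms n) + 1)) (φ (ns (ms n)))) atTop
      (nhds (Dψ ab.1 ab.2)) := (hψcont.tendsto ab).comp hlim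
  have hDzero : Tendsto (fun n => Dψ (φ (ns (ms n) + 1)) (φ (ns (ms n)))) atTop (nhds 0) :=
    hg.comp ((hns.comp (hms.tendsto_atTop)))
  have heq : Dψ ab.1 ab.2 = 0 := tendsto_nhds_unique hDlim hDzero
  have hab' : ab.1 = ab.2 := (hψident _ _).mp heq
  have : Tendsto (fun n => φ (ns (ms n) + 1) - φ (ns (ms n))) atTop (nhds (ab.1 - ab.2)) :=
    h1.sub h2
  rw [hab', sub_self] at this
  exact this
end

section
/- Let (φ^k) be a sequence in a compact set Φ^0 ⊆ ℝ^d satisfying D̂(φ^{k+1}) + D_ψ(φ^{k+1},φ^k) ≤ D̂(φ^k), with D̂ and D_ψ continuous, D_ψ ≥ 0, and (D̂(φ^k))_k convergent. Then there exist points φ̃, φ̄ ∈ Φ^0 which are limits of subsequences (φ^{N(k)}) and (φ^{N(k)-1}) respectively, and for these limits D_ψ(φ̃,φ̄) = 0. -/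
/-!
Pair each iterate with its predecessor: by compactness of `Φ0 ×ˢ Φ0` the pairs `(φ^{k+1}, φ^k)` have
a convergent subsequence, with limit `(φ̃, φ̄)`. By the decrease inequality, the proximal terms
`D_ψ(φ^{k+1}, φ^k)` are squeezed between `0` and `D̂(φ^k) - D̂(φ^{k+1}) → 0`, so by continuity
`D_ψ(φ̃, φ̄) = 0`.
-/

open Filter Topology

theorem tendsto_zero_of_succ_add_le {u f : ℕ → ℝ} {L : ℝ} (hu : Tendsto u atTop (𝓝 L))
    (hf : ∀ k, 0 ≤ f k) (hle : ∀ k, u (k + 1) + f k ≤ u k) : Tendsto f atTop (𝓝 0) := by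
  have hgap : Tendsto (fun k => u k - u (k + 1)) atTop (𝓝 0) := by
    simpa using hu.sub (hu.comp (tendsto_add_atTop_nat 1))
  exact squeeze_zero hf (fun k => by linarith [hle k]) hgap

theorem IsCompact.exists_subseq_tendsto_succ_and_self {X : Type*} [TopologicalSpace X]
    [FirstCountableTopology X] {s : Set X} (hs : IsCompact s) {x : ℕ → X} (hx : ∀ k, x k ∈ s) :
    ∃ a ∈ s, ∃ b ∈ s, ∃ σ : ℕ → ℕ, StrictMono σ ∧
      Tendsto (fun k => x (σ k + 1)) atTop (𝓝 a) ∧ Tendsto (fun k => x (σ k)) atTop (𝓝 b) := by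
  obtain ⟨p, ⟨ha, hb⟩, σ, hσ, hlim⟩ :=
    (hs.prod hs).tendsto_subseq (x := fun k => (x (k + 1), x k)) fun k => ⟨hx (k + 1), hx k⟩
  exact ⟨p.1, ha, p.2, hb, σ, hσ, (continuous_fst.tendsto p).comp hlim,
    (continuous_snd.tendsto p).comp hlim⟩

theorem exists_subsequential_limits_with_vanishing_proximal_term_general
    {d : ℕ} (Φ0 : Set (Fin d → ℝ)) (hΦ0 : IsCompact Φ0)
    (Dhat : (Fin d → ℝ) → ℝ)
    (Dψ : (Fin d → ℝ) → (Fin d → ℝ) → ℝ)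
    (hψcont : Continuous fun p : (Fin d → ℝ) × (Fin d → ℝ) => Dψ p.1 p.2)
    (hψnonneg : ∀ φ φ', 0 ≤ Dψ φ φ')
    (φ : ℕ → (Fin d → ℝ)) (hmem : ∀ k, φ k ∈ Φ0)
    (hineq : ∀ k, Dhat (φ (k+1)) + Dψ (φ (k+1)) (φ k) ≤ Dhat (φ k))
    (L : ℝ) (hconv : Tendsto (fun k => Dhat (φ k)) atTop (nhds L)) :
    ∃ φtilde ∈ Φ0, ∃ φbar ∈ Φ0, ∃ N : ℕ → ℕ, StrictMono N ∧ (∀ k, 1 ≤ N k) ∧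
      Tendsto (fun k => φ (N k)) atTop (nhds φtilde) ∧
      Tendsto (fun k => φ (N k - 1)) atTop (nhds φbar) ∧
      Dψ φtilde φbar = 0 := by
  obtain ⟨φtilde, htilde, φbar, hbar, σ, hσ, hsucc, hself⟩ :=
    hΦ0.exists_subseq_tendsto_succ_and_self hmem
  have hprox : Tendsto (fun k => Dψ (φ (k + 1)) (φ k)) atTop (𝓝 0) :=
    tendsto_zero_of_succ_add_le hconv (fun k => hψnonneg _ _) hineq
  have hlimit : Tendsto (fun k => Dψ (φ (σ k + 1)) (φ (σ k))) atTop (𝓝 (Dψ φtilde φbar)) :=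
    (hψcont.tendsto (φtilde, φbar)).comp (hsucc.prodMk_nhds hself)
  refine ⟨φtilde, htilde, φbar, hbar, fun k => σ k + 1, fun _ _ h => Nat.succ_lt_succ (hσ h),
    fun _ => Nat.le_add_left 1 _, hsucc, by simpa using hself, ?_⟩
  exact tendsto_nhds_unique hlimit (hprox.comp hσ.tendsto_atTop)

/-- In a compact set, under the proximal decrease inequality and convergence of
`(D̂(φ^k))`, there are subsequential limits `φ̃` of `(φ^{N(k)})` and `φ̄` of
`(φ^{N(k)-1})` with `D_ψ(φ̃, φ̄) = 0`. -/
theorem exists_subsequential_limits_with_vanishing_proximal_term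
    {d : ℕ} (Φ0 : Set (Fin d → ℝ)) (hΦ0 : IsCompact Φ0)
    (Dhat : (Fin d → ℝ) → ℝ) (hDcont : Continuous Dhat)
    (Dψ : (Fin d → ℝ) → (Fin d → ℝ) → ℝ)
    (hψcont : Continuous fun p : (Fin d → ℝ) × (Fin d → ℝ) => Dψ p.1 p.2)
    (hψnonneg : ∀ φ φ', 0 ≤ Dψ φ φ')
    (φ : ℕ → (Fin d → ℝ)) (hmem : ∀ k, φ k ∈ Φ0)
    (hineq : ∀ k, Dhat (φ (k+1)) + Dψ (φ (k+1)) (φ k) ≤ Dhat (φ k))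
    (L : ℝ) (hconv : Tendsto (fun k => Dhat (φ k)) atTop (nhds L)) :
    ∃ φtilde ∈ Φ0, ∃ φbar ∈ Φ0, ∃ N : ℕ → ℕ, StrictMono N ∧ (∀ k, 1 ≤ N k) ∧
      Tendsto (fun k => φ (N k)) atTop (nhds φtilde) ∧
      Tendsto (fun k => φ (N k - 1)) atTop (nhds φbar) ∧
      Dψ φtilde φbar = 0 :=
  exists_subsequential_limits_with_vanishing_proximal_term_general Φ0 hΦ0 Dhat Dψ hψcont hψnonneg φ
    hmem hineq L hconv
end

section
/- In the two-component Gaussian mixture model p_{λ,μ₁,μ₂}(y) = λ·N(y;μ₁,1) + (1−λ)·N(y;μ₂,1), given n ≥ 2 observations y₁,…,y_n with at least two distinct values, the equality h_i(1|λ,μ₁,μ₂) = h_i(1|λ',μ'₁,μ'₂) of the posterior membership probabilities for all i = 1,…,n holds if and only if μ₁ − μ₂ = μ'₁ − μ'₂ and log((1−λ)/λ) + ½μ₁² − ½μ₂² = log((1−λ')/λ') + ½μ'₁² − ½μ'₂². -/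
open Real

/-- In the two-component Gaussian mixture with unit variances, given at least two
distinct observations, equality of all posterior membership probabilities
`h_i(1|λ,μ₁,μ₂) = h_i(1|λ',μ'₁,μ'₂)` holds iff `μ₁ − μ₂ = μ'₁ − μ'₂` and
`log((1−λ)/λ) + μ₁²/2 − μ₂²/2 = log((1−λ')/λ') + μ'₁²/2 − μ'₂²/2`. -/
theorem gaussian_mixture_posterior_eq_iff
    (n : ℕ) (y : Fin n → ℝ) (i j : Fin n) (hij : y i ≠ y j)
    (lam lam' : ℝ) (hlam : lam ∈ Set.Ioo (0:ℝ) 1) (hlam' : lam' ∈ Set.Ioo (0:ℝ) 1)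
    (μ₁ μ₂ μ₁' μ₂' : ℝ) :
    (∀ i : Fin n,
      lam * Real.exp (-(y i - μ₁)^2 / 2) /
        (lam * Real.exp (-(y i - μ₁)^2 / 2) + (1 - lam) * Real.exp (-(y i - μ₂)^2 / 2))
      = lam' * Real.exp (-(y i - μ₁')^2 / 2) /
        (lam' * Real.exp (-(y i - μ₁')^2 / 2) + (1 - lam') * Real.exp (-(y i - μ₂')^2 / 2)))
    ↔ (μ₁ - μ₂ = μ₁' - μ₂' ∧
        Real.log ((1 - lam) / lam) + μ₁^2 / 2 - μ₂^2 / 2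
          = Real.log ((1 - lam') / lam') + μ₁'^2 / 2 - μ₂'^2 / 2) := by
  obtain ⟨hl0, hl1⟩ := hlam
  obtain ⟨hl0', hl1'⟩ := hlam'
  have h1l : (0:ℝ) < 1 - lam := by linarith
  have h1l' : (0:ℝ) < 1 - lam' := by linarith
  have hld : Real.log ((1 - lam) / lam) = Real.log (1 - lam) - Real.log lam :=
    Real.log_div (by linarith) (by linarith)
  have hld' : Real.log ((1 - lam') / lam') = Real.log (1 - lam') - Real.log lam' :=
    Real.log_div (by linarith) (by linarith)
  have key : ∀ z : ℝ,
      (lam * Real.exp (-(z - μ₁)^2 / 2) /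
        (lam * Real.exp (-(z - μ₁)^2 / 2) + (1 - lam) * Real.exp (-(z - μ₂)^2 / 2))
      = lam' * Real.exp (-(z - μ₁')^2 / 2) /
        (lam' * Real.exp (-(z - μ₁')^2 / 2) + (1 - lam') * Real.exp (-(z - μ₂')^2 / 2)))
      ↔ Real.log ((1 - lam) / lam) + (μ₂ - μ₁) * z + (μ₁^2 - μ₂^2) / 2
        = Real.log ((1 - lam') / lam') + (μ₂' - μ₁') * z + (μ₁'^2 - μ₂'^2) / 2 := by
    intro z
    set A := -(z - μ₁)^2 / 2 with hA
    set B := -(z - μ₂)^2 / 2 with hB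
    set A' := -(z - μ₁')^2 / 2 with hA'
    set B' := -(z - μ₂')^2 / 2 with hB'
    have ha : (0:ℝ) < lam * Real.exp A := by positivity
    have hb : (0:ℝ) < (1 - lam) * Real.exp B := by positivity
    have hc : (0:ℝ) < lam' * Real.exp A' := by positivity
    have hd : (0:ℝ) < (1 - lam') * Real.exp B' := by positivity
    rw [div_eq_div_iff (by linarith) (by linarith)]
    have hprod : lam * Real.exp A * ((1 - lam') * Real.exp B')
        = Real.exp (Real.log lam + Real.log (1 - lam') + A + B') := by
      rw [Real.exp_add, Real.exp_add, Real.exp_add, Real.exp_log hl0,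
        Real.exp_log h1l']
      ring
    have hprod' : lam' * Real.exp A' * ((1 - lam) * Real.exp B)
        = Real.exp (Real.log lam' + Real.log (1 - lam) + A' + B) := by
      rw [Real.exp_add, Real.exp_add, Real.exp_add, Real.exp_log hl0',
        Real.exp_log h1l]
      ring
    constructor
    · intro h
      have h2 : lam * Real.exp A * ((1 - lam') * Real.exp B')
          = lam' * Real.exp A' * ((1 - lam) * Real.exp B) := by linear_combination h
      rw [hprod, hprod'] at h2
      have h3 := Real.exp_injective h2
      rw [hld, hld', hA, hB, hA', hB'] at *
      linear_combination -h3
    · intro h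
      have h3 : Real.log lam + Real.log (1 - lam') + A + B'
          = Real.log lam' + Real.log (1 - lam) + A' + B := by
        rw [hld, hld'] at h
        rw [hA, hB, hA', hB']
        linear_combination -h
      have h2 : lam * Real.exp A * ((1 - lam') * Real.exp B')
          = lam' * Real.exp A' * ((1 - lam) * Real.exp B) := by
        rw [hprod, hprod', h3]
      linear_combination h2
  constructor
  · intro hall
    have hi := (key (y i)).mp (hall i)
    have hj := (key (y j)).mp (hall j)
    have hslope : μ₂ - μ₁ = μ₂' - μ₁' := by
      have hd : (μ₂ - μ₁) * (y i - y j) = (μ₂' - μ₁') * (y i - y j) := by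
        linear_combination hi - hj
      exact mul_right_cancel₀ (sub_ne_zero.mpr hij) hd
    constructor
    · linarith
    · linear_combination hi - (y i) * hslope
  · rintro ⟨h1, h2⟩ k
    exact (key (y k)).mpr (by linear_combination h2 - (y k) * h1)
end

section
/- There exist distinct parameter vectors φ = (λ,μ₁,μ₂) ≠ φ' = (λ',μ'₁,μ'₂) in (0,1)×ℝ² (for example λ=2/3, μ₁=0, μ₂=1 and λ'=1/2, μ'₁=1/2, μ'₂=3/2) such that for every y ∈ ℝ the posterior membership probability of the two-component Gaussian mixture satisfies h(1|φ)(y) = h(1|φ')(y). Consequently the proximal term D_ψ(φ,φ') vanishes for φ ≠ φ' and the identifiability assumption A3 fails for the Gaussian mixture. -/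
open Real

/-- There exist distinct parameters `(λ,μ₁,μ₂) ≠ (λ',μ'₁,μ'₂)` in `(0,1) × ℝ²`
(e.g. `λ=2/3, μ₁=0, μ₂=1` and `λ'=1/2, μ'₁=1/2, μ'₂=3/2`) giving identical posterior
membership probabilities `h(1|φ)(y) = h(1|φ')(y)` for every `y ∈ ℝ`; hence the
identifiability assumption A3 fails for the Gaussian mixture. -/
theorem gaussian_mixture_identifiability_fails :
    ∃ (lam μ₁ μ₂ lam' μ₁' μ₂' : ℝ),
      lam ∈ Set.Ioo (0:ℝ) 1 ∧ lam' ∈ Set.Ioo (0:ℝ) 1 ∧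
      (lam, μ₁, μ₂) ≠ (lam', μ₁', μ₂') ∧
      ∀ y : ℝ,
        lam * Real.exp (-(y - μ₁)^2 / 2) /
          (lam * Real.exp (-(y - μ₁)^2 / 2) + (1 - lam) * Real.exp (-(y - μ₂)^2 / 2))
        = lam' * Real.exp (-(y - μ₁')^2 / 2) /
          (lam' * Real.exp (-(y - μ₁')^2 / 2) + (1 - lam') * Real.exp (-(y - μ₂')^2 / 2)) := by
  refine ⟨2/3, 0, 1, 1/2, Real.log 2, Real.log 2 + 1, by norm_num, by norm_num, ?_, ?_⟩
  · intro h
    have : (2/3 : ℝ) = 1/2 := congrArg Prod.fst h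
    norm_num at this
  · intro y
    have h1 : (0:ℝ) < 2/3 * Real.exp (-(y - 0)^2 / 2)
        + (1 - 2/3) * Real.exp (-(y - 1)^2 / 2) := by positivity
    have h2 : (0:ℝ) < 1/2 * Real.exp (-(y - Real.log 2)^2 / 2)
        + (1 - 1/2) * Real.exp (-(y - (Real.log 2 + 1))^2 / 2) := by positivity
    rw [div_eq_div_iff h1.ne' h2.ne']
    have key : Real.exp (-(y - 0)^2 / 2) * Real.exp (-(y - (Real.log 2 + 1))^2 / 2)
        = Real.exp (-(y - Real.log 2)^2 / 2) * Real.exp (-(y - 1)^2 / 2) / 2 := by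
      rw [← Real.exp_add, ← Real.exp_add]
      have h3 : -(y - 0)^2 / 2 + -(y - (Real.log 2 + 1))^2 / 2
          = (-(y - Real.log 2)^2 / 2 + -(y - 1)^2 / 2) - Real.log 2 := by ring
      rw [h3, Real.exp_sub, Real.exp_log two_pos]
    linear_combination (1/3 : ℝ) * key
end

section
/- For the Cauchy densities p_a(y) = a/(π(a² + y²)) with a, b > 0, one has ∫_ℝ p_b(y)²/p_a(y) dy = (a² + b²)/(2ab). -/
open Real MeasureTheory Filter Topology

/-!
After pulling out `b² / (π a)` the integrand is `(a² + y²) / (b² + y²)²`, a combination of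
`1 / (b² + y²)`, whose integral is `π / b` via `arctan`, and `(b² - y²) / (b² + y²)²`, the
derivative of `y / (b² + y²)`; the latter vanishes at `±∞`, so that term integrates to zero.
-/

lemma integrable_inv_sq_add_sq {b : ℝ} (hb : b ≠ 0) :
    Integrable fun y : ℝ => (b ^ 2 + y ^ 2)⁻¹ := by
  have h := (integrable_inv_one_add_sq.comp_div hb).const_mul (b ^ 2)⁻¹
  refine h.congr (ae_of_all _ fun y => ?_)
  field_simp

lemma integral_univ_inv_sq_add_sq {b : ℝ} (hb : b ≠ 0) :
    ∫ y : ℝ, (b ^ 2 + y ^ 2)⁻¹ = π / |b| := by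
  have h : ∀ y : ℝ, (b ^ 2 + y ^ 2)⁻¹ = (b ^ 2)⁻¹ * (1 + (y / b) ^ 2)⁻¹ := fun y => by
    field_simp
  simp only [h, integral_const_mul, Measure.integral_comp_div (fun y : ℝ => (1 + y ^ 2)⁻¹),
    integral_univ_inv_one_add_sq, smul_eq_mul]
  rw [← sq_abs b]
  field_simp

lemma hasDerivAt_div_sq_add_sq {b : ℝ} (hb : b ≠ 0) (y : ℝ) :
    HasDerivAt (fun y : ℝ => y / (b ^ 2 + y ^ 2)) ((b ^ 2 - y ^ 2) / (b ^ 2 + y ^ 2) ^ 2) y := by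
  have hne : b ^ 2 + y ^ 2 ≠ 0 := by positivity
  refine ((hasDerivAt_id' y).div ((hasDerivAt_pow 2 y).const_add (b ^ 2)) hne).congr_deriv ?_
  ring

lemma tendsto_div_sq_add_sq_cocompact (b : ℝ) :
    Tendsto (fun y : ℝ => y / (b ^ 2 + y ^ 2)) (cocompact ℝ) (𝓝 0) := by
  have h : Tendsto (fun y : ℝ => ‖y‖⁻¹) (cocompact ℝ) (𝓝 0) :=
    tendsto_norm_cocompact_atTop.inv_tendsto_atTop
  refine squeeze_zero_norm' ?_ h
  filter_upwards [tendsto_norm_cocompact_atTop.eventually_gt_atTop (0 : ℝ)] with y hy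
  calc ‖y / (b ^ 2 + y ^ 2)‖ = ‖y‖ / (b ^ 2 + ‖y‖ ^ 2) := by
        rw [norm_div, Real.norm_of_nonneg (by positivity : 0 ≤ b ^ 2 + y ^ 2), Real.norm_eq_abs,
          sq_abs]
    _ ≤ ‖y‖ / ‖y‖ ^ 2 := by gcongr; exact le_add_of_nonneg_left (sq_nonneg b)
    _ = ‖y‖⁻¹ := by field_simp

lemma integrable_sq_sub_sq_div_sq_add_sq_sq {b : ℝ} (hb : b ≠ 0) :
    Integrable fun y : ℝ => (b ^ 2 - y ^ 2) / (b ^ 2 + y ^ 2) ^ 2 := by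
  refine (integrable_inv_sq_add_sq hb).mono' (by fun_prop : Measurable _).aestronglyMeasurable
    (ae_of_all _ fun y => ?_)
  have hpos : 0 < b ^ 2 + y ^ 2 := by positivity
  rw [norm_div, norm_pow, Real.norm_of_nonneg hpos.le, div_le_iff₀ (by positivity),
    sq (b ^ 2 + y ^ 2), inv_mul_cancel_left₀ hpos.ne', Real.norm_eq_abs, abs_le]
  constructor <;> nlinarith [sq_nonneg b, sq_nonneg y]

lemma integral_sq_sub_sq_div_sq_add_sq_sq {b : ℝ} (hb : b ≠ 0) :
    ∫ y : ℝ, (b ^ 2 - y ^ 2) / (b ^ 2 + y ^ 2) ^ 2 = 0 := by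
  have h := tendsto_div_sq_add_sq_cocompact b
  simpa using integral_of_hasDerivAt_of_tendsto (hasDerivAt_div_sq_add_sq hb)
    (integrable_sq_sub_sq_div_sq_add_sq_sq hb) (h.mono_left atBot_le_cocompact)
    (h.mono_left atTop_le_cocompact)

lemma integral_sq_add_sq_div_sq_add_sq_sq (a : ℝ) {b : ℝ} (hb : b ≠ 0) :
    ∫ y : ℝ, (a ^ 2 + y ^ 2) / (b ^ 2 + y ^ 2) ^ 2 = π * (a ^ 2 + b ^ 2) / (2 * |b| ^ 3) := by
  have hsplit : ∀ y : ℝ, (a ^ 2 + y ^ 2) / (b ^ 2 + y ^ 2) ^ 2 =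
      (a ^ 2 + b ^ 2) / (2 * b ^ 2) * (b ^ 2 + y ^ 2)⁻¹ +
        (a ^ 2 - b ^ 2) / (2 * b ^ 2) * ((b ^ 2 - y ^ 2) / (b ^ 2 + y ^ 2) ^ 2) := fun y => by
    have : b ^ 2 + y ^ 2 ≠ 0 := by positivity
    field_simp
    ring
  simp only [hsplit]
  rw [integral_add ((integrable_inv_sq_add_sq hb).const_mul _)
      ((integrable_sq_sub_sq_div_sq_add_sq_sq hb).const_mul _), integral_const_mul,
    integral_const_mul, integral_univ_inv_sq_add_sq hb, integral_sq_sub_sq_div_sq_add_sq_sq hb,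
    ← sq_abs b]
  have : |b| ≠ 0 := abs_ne_zero.2 hb
  field_simp
  ring

/-- For Cauchy densities `p_a(y) = a/(π(a²+y²))` with `a, b > 0`,
`∫ p_b(y)²/p_a(y) dy = (a²+b²)/(2ab)`. -/
theorem cauchy_chi_square_integral (a b : ℝ) (ha : 0 < a) (hb : 0 < b) :
    ∫ y : ℝ, (b / (π * (b^2 + y^2)))^2 / (a / (π * (a^2 + y^2)))
      = (a^2 + b^2) / (2 * a * b) := by
  have hratio : ∀ y : ℝ, (b / (π * (b ^ 2 + y ^ 2))) ^ 2 / (a / (π * (a ^ 2 + y ^ 2))) =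
      b ^ 2 / (π * a) * ((a ^ 2 + y ^ 2) / (b ^ 2 + y ^ 2) ^ 2) := fun y => by
    have : b ^ 2 + y ^ 2 ≠ 0 := by positivity
    have : a ^ 2 + y ^ 2 ≠ 0 := by positivity
    field_simp
  simp only [hratio, integral_const_mul, integral_sq_add_sq_div_sq_add_sq_sq a hb.ne',
    abs_of_pos hb]
  field_simp
end

section
/- For the Cauchy model with zero location, the conditional density of the label is h(x|a)(y) = f(x,y|a)/p_a(y) = y² e^x (a²+y²)/(a²+e^x y²)². If a, b ≥ ε > 0 and there exist 5 distinct real observations y₁,…,y₅ (all nonzero) such that h(x|a)(y_i) = h(x|b)(y_i) for all x ≥ 0 and all i, then a = b. -/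
open Real

/-! At `x = 0` the density reduces to `y² / (a² + y²)`, which already determines `a²` from a single
nonzero observation; the sign of `a` is fixed by `a ≥ ε > 0`. -/

noncomputable def cauchyLabelDensity (a x y : ℝ) : ℝ :=
  y ^ 2 * exp x * (a ^ 2 + y ^ 2) / (a ^ 2 + exp x * y ^ 2) ^ 2

lemma cauchyLabelDensity_zero (a y : ℝ) (hy : y ≠ 0) :
    cauchyLabelDensity a 0 y = y ^ 2 / (a ^ 2 + y ^ 2) := by
  have hpos : a ^ 2 + y ^ 2 ≠ 0 := by positivity
  rw [cauchyLabelDensity, exp_zero, mul_one, one_mul, sq (a ^ 2 + y ^ 2)]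
  exact mul_div_mul_right _ _ hpos

lemma cauchyLabelDensity_zero_eq_iff (a b y : ℝ) (hy : y ≠ 0) :
    cauchyLabelDensity a 0 y = cauchyLabelDensity b 0 y ↔ a ^ 2 = b ^ 2 := by
  rw [cauchyLabelDensity_zero a y hy, cauchyLabelDensity_zero b y hy,
    div_eq_mul_inv, div_eq_mul_inv, mul_right_inj' (pow_ne_zero 2 hy), inv_inj, add_left_inj]

theorem cauchy_label_density_identifiable_general
    (ε a b : ℝ) (hε : 0 < ε) (ha : ε ≤ a) (hb : ε ≤ b)
    (y : Fin 5 → ℝ) (hy0 : ∀ i, y i ≠ 0)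
    (heq : ∀ i : Fin 5, ∀ x : ℝ, 0 ≤ x →
      (y i)^2 * Real.exp x * (a^2 + (y i)^2) / (a^2 + Real.exp x * (y i)^2)^2
        = (y i)^2 * Real.exp x * (b^2 + (y i)^2) / (b^2 + Real.exp x * (y i)^2)^2) :
    a = b := by
  have hsq : a ^ 2 = b ^ 2 :=
    (cauchyLabelDensity_zero_eq_iff a b (y 0) (hy0 0)).mp (heq 0 0 le_rfl)
  exact (pow_left_inj₀ (by linarith) (by linarith) two_ne_zero).mp hsq

/-- For the Cauchy scale model, the conditional densities of the labels are
`h(x|a)(y) = y²eˣ(a²+y²)/(a²+eˣy²)²`. If `a, b ≥ ε > 0` and these coincide at 5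
distinct nonzero observations for all `x ≥ 0`, then `a = b`. -/
theorem cauchy_label_density_identifiable
    (ε a b : ℝ) (hε : 0 < ε) (ha : ε ≤ a) (hb : ε ≤ b)
    (y : Fin 5 → ℝ) (hy : Function.Injective y) (hy0 : ∀ i, y i ≠ 0)
    (heq : ∀ i : Fin 5, ∀ x : ℝ, 0 ≤ x →
      (y i)^2 * Real.exp x * (a^2 + (y i)^2) / (a^2 + Real.exp x * (y i)^2)^2
        = (y i)^2 * Real.exp x * (b^2 + (y i)^2) / (b^2 + Real.exp x * (y i)^2)^2) :
    a = b :=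
  cauchy_label_density_identifiable_general ε a b hε ha hb y hy0 heq
end

section
/- For the Cauchy scale model, define f(a,b) = (a²+b²)/(2ab) − (1/(2n)) Σ_{i=1}^n a²(b²+y_i²)²/(b²(a²+y_i²)²) for a, b ≥ ε > 0. There exists b₀ < ∞ such that for all a ≥ ε and all b ≥ b₀, the partial derivative ∂f/∂b (a,b) is negative; consequently sup_{b ≥ ε} f(a,b) = sup_{b ∈ [ε,b₀]} f(a,b) for every a ≥ ε. -/
/-!
Differentiating in `b` gives
`∂f/∂b = 1/(2a) - a/(2b²) - (1/(2n)) Σᵢ 2a²(b⁴ - yᵢ⁴)/(b³(a² + yᵢ²)²)`.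
Fix `S ≥ 1` with `yᵢ² ≤ S` for all `i`. Once `b ≥ 2S`, every summand is at least
`(7/4)a²b/(a² + S)²`, which grows linearly in `b`. If `b ≤ a`, the first two terms already have
nonpositive sum. Otherwise `1/(2a)` is beaten by the linear term: through `a ≥ ε` and
`bε³ ≥ 16S²` when `a² ≤ 4S`, and through `a < b` when `a² > 4S`. So `f(a, ·)` is antitone on `[b₀, ∞)`, and its values there
never exceed `f(a, b₀)`.
-/

open Set

noncomputable section

def cauchyDualObjective (n : ℕ) (y : Fin n → ℝ) (a b : ℝ) : ℝ :=
  (a^2 + b^2) / (2 * a * b) -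
    (1 / (2 * n)) * ∑ i : Fin n, a^2 * (b^2 + (y i)^2)^2 / (b^2 * (a^2 + (y i)^2)^2)

def cauchyDualObjectiveDeriv (n : ℕ) (y : Fin n → ℝ) (a b : ℝ) : ℝ :=
  1 / (2 * a) - a / (2 * b^2) -
    (1 / (2 * n)) * ∑ i : Fin n, 2 * a^2 * (b^4 - (y i)^4) / (b^3 * (a^2 + (y i)^2)^2)

end

section Derivative

variable {a b : ℝ}

lemma hasDerivAt_sq_add_sq_div_two_mul_mul (ha : a ≠ 0) (hb : b ≠ 0) :
    HasDerivAt (fun b' : ℝ => (a^2 + b'^2) / (2 * a * b')) (1 / (2 * a) - a / (2 * b^2)) b := by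
  have hnum : HasDerivAt (fun b' : ℝ => a^2 + b'^2) (2 * b) b := by
    simpa using (hasDerivAt_pow 2 b).const_add (a^2)
  have hden : HasDerivAt (fun b' : ℝ => 2 * a * b') (2 * a) b := by
    simpa using (hasDerivAt_id b).const_mul (2 * a)
  refine (hnum.fun_div hden (by positivity)).congr_deriv ?_
  field_simp
  ring

lemma hasDerivAt_cauchy_summand (t : ℝ) (ha : a ≠ 0) (hb : b ≠ 0) :
    HasDerivAt (fun b' : ℝ => a^2 * (b'^2 + t^2)^2 / (b'^2 * (a^2 + t^2)^2))
      (2 * a^2 * (b^4 - t^4) / (b^3 * (a^2 + t^2)^2)) b := by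
  have hnum : HasDerivAt (fun b' : ℝ => b'^2 + t^2) (2 * b) b := by
    simpa using (hasDerivAt_pow 2 b).add_const (t^2)
  have hden : HasDerivAt (fun b' : ℝ => b'^2 * (a^2 + t^2)^2) (2 * b * (a^2 + t^2)^2) b := by
    simpa using (hasDerivAt_pow 2 b).mul_const ((a^2 + t^2)^2)
  refine (((hnum.fun_pow 2).const_mul (a^2)).fun_div hden (by positivity)).congr_deriv ?_
  field_simp
  ring

lemma hasDerivAt_cauchyDualObjective (n : ℕ) (y : Fin n → ℝ) (ha : a ≠ 0) (hb : b ≠ 0) :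
    HasDerivAt (cauchyDualObjective n y a) (cauchyDualObjectiveDeriv n y a b) b :=
  (hasDerivAt_sq_add_sq_div_two_mul_mul ha hb).sub <|
    (HasDerivAt.fun_sum fun i _ => hasDerivAt_cauchy_summand (y i) ha hb).const_mul _

end Derivative

section Negativity

variable {ε a b S : ℝ}

lemma seven_fourths_mul_div_le_cauchy_summand {t : ℝ} (ha : a ≠ 0) (hb : 0 < b)
    (ht : t^2 ≤ S) (hbS : 8 * S^2 ≤ b^4) :
    7 / 4 * a^2 * b / (a^2 + S)^2 ≤ 2 * a^2 * (b^4 - t^4) / (b^3 * (a^2 + t^2)^2) := by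
  have ht4 : t^4 ≤ S^2 := by nlinarith [pow_le_pow_left₀ (sq_nonneg t) ht 2]
  have hnum : 7 / 8 * b^4 ≤ b^4 - t^4 := by linarith
  have hden : (a^2 + t^2)^2 ≤ (a^2 + S)^2 := pow_le_pow_left₀ (by positivity) (by linarith) 2
  calc 7 / 4 * a^2 * b / (a^2 + S)^2 = 2 * a^2 * (7 / 8 * b^4) / (b^3 * (a^2 + S)^2) := by
        have : 0 < a^2 + S := add_pos_of_pos_of_nonneg (by positivity) ((sq_nonneg t).trans ht)
        field_simp
        ring
    _ ≤ 2 * a^2 * (b^4 - t^4) / (b^3 * (a^2 + t^2)^2) := by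
        gcongr
        nlinarith [sq_nonneg a, pow_pos hb 4]

lemma one_div_two_mul_sub_div_lt (hε : 0 < ε) (ha : ε ≤ a) (hb : 0 < b) (hS : 0 < S)
    (hbε : 16 * S^2 ≤ b * ε^3) :
    1 / (2 * a) - a / (2 * b^2) < 7 / 8 * a^2 * b / (a^2 + S)^2 := by
  have ha0 : 0 < a := hε.trans_le ha
  rcases le_or_gt b a with hba | hab
  · have hpos : 0 < 7 / 8 * a^2 * b / (a^2 + S)^2 := by positivity
    have : 1 / (2 * a) ≤ a / (2 * b^2) := by
      rw [div_le_div_iff₀ (by positivity) (by positivity)]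
      nlinarith
    linarith
  have hdrop : 1 / (2 * a) - a / (2 * b^2) < 1 / (2 * a) := by
    have : 0 < a / (2 * b^2) := by positivity
    linarith
  refine hdrop.trans_le ?_
  rcases le_or_gt (a^2) (4 * S) with hsmall | hlarge
  · calc 1 / (2 * a) ≤ 1 / (2 * ε) := by gcongr
      _ ≤ 7 / 8 * ε^2 * b / (25 * S^2) := by
        rw [div_le_div_iff₀ (by positivity) (by positivity)]
        nlinarith [pow_pos hS 2]
      _ ≤ 7 / 8 * a^2 * b / (a^2 + S)^2 := by
        gcongr
        nlinarith
  · calc 1 / (2 * a) ≤ 14 / 25 * b / a^2 := by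
          rw [div_le_div_iff₀ (by positivity) (by positivity)]
          nlinarith
      _ ≤ 7 / 8 * a^2 * b / (a^2 + S)^2 := by
        rw [div_le_div_iff₀ (by positivity) (by positivity)]
        nlinarith [mul_nonneg (mul_nonneg hb.le (sub_nonneg.2 hlarge.le))
          (by positivity : (0:ℝ) ≤ 9 * a^2 + 4 * S)]

lemma cauchyDualObjectiveDeriv_neg {n : ℕ} (hn : 0 < n) {y : Fin n → ℝ}
    (hε : 0 < ε) (ha : ε ≤ a) (hy : ∀ i, y i ^ 2 ≤ S) (hS : 1 ≤ S)
    (hbS : 2 * S ≤ b) (hbε : 16 * S^2 ≤ b * ε^3) :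
    cauchyDualObjectiveDeriv n y a b < 0 := by
  have ha0 : a ≠ 0 := (hε.trans_le ha).ne'
  have hb : 0 < b := by linarith
  have hb4 : 8 * S^2 ≤ b^4 := by
    have : (2 * S)^4 ≤ b^4 := pow_le_pow_left₀ (by linarith) hbS 4
    nlinarith [one_le_pow₀ (n := 2) hS]
  have hsum : 7 / 8 * a^2 * b / (a^2 + S)^2 ≤ (1 / (2 * n)) *
      ∑ i : Fin n, 2 * a^2 * (b^4 - (y i)^4) / (b^3 * (a^2 + (y i)^2)^2) := by
    have hcard := Finset.card_nsmul_le_sum Finset.univ _ _ fun i _ =>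
      seven_fourths_mul_div_le_cauchy_summand ha0 hb (hy i) hb4
    rw [Finset.card_univ, Fintype.card_fin, nsmul_eq_mul] at hcard
    have hn' : (0 : ℝ) < n := by exact_mod_cast hn
    calc 7 / 8 * a^2 * b / (a^2 + S)^2
        = 1 / (2 * n) * (n * (7 / 4 * a^2 * b / (a^2 + S)^2)) := by
          field_simp
          ring
      _ ≤ _ := by gcongr
  have := one_div_two_mul_sub_div_lt hε ha hb (by linarith) hbε
  unfold cauchyDualObjectiveDeriv
  linarith

end Negativity

lemma sSup_image_Ici_eq_sSup_image_Icc_of_antitoneOn {α β : Type*} [LinearOrder α]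
    [ConditionallyCompleteLinearOrder β] {f : α → β} {ε b₀ : α} (hεb₀ : ε ≤ b₀)
    (hf : AntitoneOn f (Ici b₀)) :
    sSup (f '' Ici ε) = sSup (f '' Icc ε b₀) := by
  apply csSup_eq_csSup_of_forall_exists_le
  · rintro _ ⟨b, hb, rfl⟩
    rcases le_total b b₀ with hbb | hbb
    · exact ⟨f b, mem_image_of_mem f ⟨hb, hbb⟩, le_rfl⟩
    · exact ⟨f b₀, mem_image_of_mem f ⟨hεb₀, le_rfl⟩, hf self_mem_Ici hbb hbb⟩
  · rintro _ ⟨b, hb, rfl⟩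
    exact ⟨f b, mem_image_of_mem f hb.1, le_rfl⟩

/-- For the dual objective `f(a,b)` of the Pearson χ² divergence in the Cauchy scale
model, there exists `b₀` such that `∂f/∂b(a,b) < 0` for all `a ≥ ε` and `b ≥ b₀`;
consequently `sup_{b ≥ ε} f(a,b) = sup_{b ∈ [ε,b₀]} f(a,b)` for every `a ≥ ε`. -/
theorem cauchy_dual_objective_eventually_decreasing
    (ε : ℝ) (hε : 0 < ε) (n : ℕ) (hn : 0 < n) (y : Fin n → ℝ) :
    ∃ b₀ : ℝ, ε ≤ b₀ ∧
      (∀ a : ℝ, ε ≤ a → ∀ b : ℝ, b₀ ≤ b →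
        deriv (fun b' : ℝ =>
          (a^2 + b'^2) / (2 * a * b') -
            (1 / (2 * n)) * ∑ i : Fin n,
              a^2 * (b'^2 + (y i)^2)^2 / (b'^2 * (a^2 + (y i)^2)^2)) b < 0) ∧
      (∀ a : ℝ, ε ≤ a →
        sSup ((fun b : ℝ =>
          (a^2 + b^2) / (2 * a * b) -
            (1 / (2 * n)) * ∑ i : Fin n,
              a^2 * (b^2 + (y i)^2)^2 / (b^2 * (a^2 + (y i)^2)^2)) '' Set.Ici ε)
        = sSup ((fun b : ℝ =>
          (a^2 + b^2) / (2 * a * b) -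
            (1 / (2 * n)) * ∑ i : Fin n,
              a^2 * (b^2 + (y i)^2)^2 / (b^2 * (a^2 + (y i)^2)^2)) '' Set.Icc ε b₀)) := by
  obtain ⟨S, hS, hy⟩ : ∃ S : ℝ, 1 ≤ S ∧ ∀ i, y i ^ 2 ≤ S := by
    refine ⟨1 + ∑ i, y i ^ 2, le_add_of_nonneg_right (by positivity), fun i => ?_⟩
    linarith [Finset.single_le_sum (fun j _ => sq_nonneg (y j)) (Finset.mem_univ i)]
  obtain ⟨b₀, hεb₀, hSb₀, hεSb₀⟩ : ∃ b₀, ε ≤ b₀ ∧ 2 * S ≤ b₀ ∧ 16 * S^2 ≤ b₀ * ε^3 := by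
    have hc : 0 ≤ 16 * S^2 / ε^3 := by positivity
    refine ⟨ε + 2 * S + 16 * S^2 / ε^3, by linarith, by linarith, ?_⟩
    rw [← div_le_iff₀ (by positivity)]
    linarith
  have hb₀ : ∀ b, b₀ ≤ b → 0 < b ∧ 2 * S ≤ b ∧ 16 * S^2 ≤ b * ε^3 := fun b hb =>
    ⟨by linarith, by linarith, hεSb₀.trans (by gcongr)⟩
  have hderiv (a) (ha : ε ≤ a) (b) (hb : b₀ ≤ b) :
      HasDerivAt (cauchyDualObjective n y a) (cauchyDualObjectiveDeriv n y a b) b :=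
    hasDerivAt_cauchyDualObjective n y (hε.trans_le ha).ne' (hb₀ b hb).1.ne'
  have hneg (a) (ha : ε ≤ a) (b) (hb : b₀ ≤ b) : cauchyDualObjectiveDeriv n y a b < 0 :=
    cauchyDualObjectiveDeriv_neg hn hε ha hy hS (hb₀ b hb).2.1 (hb₀ b hb).2.2
  refine ⟨b₀, hεb₀, fun a ha b hb => ?_, fun a ha => ?_⟩
  · exact (hderiv a ha b hb).deriv ▸ hneg a ha b hb
  · refine sSup_image_Ici_eq_sSup_image_Icc_of_antitoneOn (f := cauchyDualObjective n y a)
      hεb₀ ?_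
    exact antitoneOn_of_hasDerivWithinAt_nonpos (convex_Ici b₀)
      (fun b hb => (hderiv a ha b hb).continuousAt.continuousWithinAt)
      (fun b hb => (hderiv a ha b (interior_subset hb)).hasDerivWithinAt)
      (fun b hb => (hneg a ha b (interior_subset hb)).le)
end

section
/- Let φ(t) = −log t + t − 1 (so that φ'(t) = 1 − 1/t). Then for any two probability densities p_φ and p_α on ℝ, ∫ φ'(p_φ(x)/p_α(x)) p_φ(x) dx = 0, and consequently the dual divergence estimator reduces to sup_α (1/n)Σ_i log p_α(y_i) − (1/n)Σ_i log p_φ(y_i); hence minimizing the dual estimator over φ is equivalent to maximizing the log-likelihood (1/n)Σ_i log p_φ(y_i). -/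
open Real MeasureTheory

lemma sSup_range_sub_const {ι : Type*} [Nonempty ι] (L : ι → ℝ)
    (h : BddAbove (Set.range L)) (c : ℝ) :
    sSup (Set.range fun α => L α - c) = sSup (Set.range L) - c := by
  have hb : BddAbove (Set.range fun α => L α - c) := by
    obtain ⟨b, hb⟩ := h
    exact ⟨b - c, by rintro _ ⟨α, rfl⟩; exact sub_le_sub_right (hb ⟨α, rfl⟩) c⟩
  apply le_antisymm
  · apply csSup_le (Set.range_nonempty _)
    rintro _ ⟨α, rfl⟩
    exact sub_le_sub_right (le_csSup h ⟨α, rfl⟩) c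
  · rw [sub_le_iff_le_add]
    apply csSup_le (Set.range_nonempty _)
    rintro _ ⟨α, rfl⟩
    rw [← sub_le_iff_le_add]
    exact le_csSup hb ⟨α, rfl⟩

/-- For `φ(t) = −log t + t − 1` (so `φ'(t) = 1 − 1/t`, `φ^#(t) = tφ'(t) − φ(t)`),
the first term of the dual estimator vanishes: `∫ φ'(p_φ/p_α) p_φ = 0`; the dual
objective for each `α` reduces to `(1/n)Σ log p_α(y_i) − (1/n)Σ log p_φ(y_i)`, and
minimizing the dual estimator over `φ` is equivalent to maximizing the
log-likelihood. -/
theorem dual_estimator_of_likelihood_divergence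
    {ι : Type*} [Nonempty ι] (p : ι → ℝ → ℝ)
    (hpos : ∀ φ x, 0 < p φ x)
    (hint : ∀ φ, Integrable (p φ))
    (hprob : ∀ φ, ∫ x, p φ x = 1)
    (n : ℕ) (hn : 0 < n) (y : Fin n → ℝ)
    (hbdd : BddAbove (Set.range fun α => (1 / (n:ℝ)) * ∑ i, Real.log (p α (y i)))) :
    (∀ φ α : ι, ∫ x, (1 - p α x / p φ x) * p φ x = 0) ∧
    (∀ φ α : ι,
      (∫ x, (1 - p α x / p φ x) * p φ x) -
        (1 / (n:ℝ)) * ∑ i, ((fun t : ℝ => t * (1 - 1/t) - (-Real.log t + t - 1))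
          (p φ (y i) / p α (y i)))
      = (1 / (n:ℝ)) * ∑ i, Real.log (p α (y i))
          - (1 / (n:ℝ)) * ∑ i, Real.log (p φ (y i))) ∧
    (∀ φ₁ φ₂ : ι,
      sSup (Set.range fun α =>
        (∫ x, (1 - p α x / p φ₁ x) * p φ₁ x) -
          (1 / (n:ℝ)) * ∑ i, ((fun t : ℝ => t * (1 - 1/t) - (-Real.log t + t - 1))
            (p φ₁ (y i) / p α (y i))))
      ≤ sSup (Set.range fun α =>
        (∫ x, (1 - p α x / p φ₂ x) * p φ₂ x) -
          (1 / (n:ℝ)) * ∑ i, ((fun t : ℝ => t * (1 - 1/t) - (-Real.log t + t - 1))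
            (p φ₂ (y i) / p α (y i))))
      ↔ (1 / (n:ℝ)) * ∑ i, Real.log (p φ₂ (y i))
          ≤ (1 / (n:ℝ)) * ∑ i, Real.log (p φ₁ (y i))) := by
  have hzero : ∀ φ α : ι, ∫ x, (1 - p α x / p φ x) * p φ x = 0 := by
    intro φ α
    have heq : ∀ x, (1 - p α x / p φ x) * p φ x = p φ x - p α x := by
      intro x
      field_simp [(hpos φ x).ne']
    rw [show (fun x => (1 - p α x / p φ x) * p φ x) = fun x => p φ x - p α x from
      funext heq]
    rw [integral_sub (hint φ) (hint α), hprob, hprob, sub_self]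
  have hterm : ∀ φ α : ι,
      (1 / (n:ℝ)) * ∑ i, ((fun t : ℝ => t * (1 - 1/t) - (-Real.log t + t - 1))
        (p φ (y i) / p α (y i)))
      = (1 / (n:ℝ)) * ∑ i, Real.log (p φ (y i))
          - (1 / (n:ℝ)) * ∑ i, Real.log (p α (y i)) := by
    intro φ α
    rw [← mul_sub, ← Finset.sum_sub_distrib]
    congr 1
    apply Finset.sum_congr rfl
    intro i _
    have h1 := (hpos φ (y i)).ne'
    have h2 := (hpos α (y i)).ne'
    have ht : (0:ℝ) < p φ (y i) / p α (y i) := div_pos (hpos φ (y i)) (hpos α (y i))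
    simp only
    rw [Real.log_div h1 h2]
    field_simp
    ring
  have hobj : ∀ φ α : ι,
      (∫ x, (1 - p α x / p φ x) * p φ x) -
        (1 / (n:ℝ)) * ∑ i, ((fun t : ℝ => t * (1 - 1/t) - (-Real.log t + t - 1))
          (p φ (y i) / p α (y i)))
      = (1 / (n:ℝ)) * ∑ i, Real.log (p α (y i))
          - (1 / (n:ℝ)) * ∑ i, Real.log (p φ (y i)) := by
    intro φ α
    rw [hzero, hterm]
    ring
  refine ⟨hzero, hobj, ?_⟩
  intro φ₁ φ₂
  set L : ι → ℝ := fun α => (1 / (n:ℝ)) * ∑ i, Real.log (p α (y i)) with hL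
  have hr : ∀ φ : ι, (Set.range fun α =>
      (∫ x, (1 - p α x / p φ x) * p φ x) -
        (1 / (n:ℝ)) * ∑ i, ((fun t : ℝ => t * (1 - 1/t) - (-Real.log t + t - 1))
          (p φ (y i) / p α (y i))))
      = Set.range fun α => L α - L φ := by
    intro φ
    exact congrArg Set.range (funext fun α => hobj φ α)
  rw [hr φ₁, hr φ₂, sSup_range_sub_const L hbdd, sSup_range_sub_const L hbdd,
    sub_le_sub_iff_left]
end
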